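/- arXiv:2512.16716 — 2 statements merged into one kernel-verified Lean document; each statement's English description precedes it below -/
import Mathlib

section
/- Let U ⊆ ℝ² be open, Φ : U → V a C² diffeomorphism onto an open set V ⊆ ℝ² whose Jacobian determinant det DΦ(x) is nonzero for every x ∈ U, and let v̂ : U → ℝ² be C¹. Define the Piola transform v : V → ℝ² by v(Φ(x)) = (det DΦ(x))⁻¹ · DΦ(x) v̂(x) for x ∈ U. Then for every x ∈ U, the divergence of v at Φ(x) satisfies (div v)(Φ(x)) = (det DΦ(x))⁻¹ · (div v̂)(x). -/
/-!
Write `A = DΦ(x)`, `B = D²Φ(x)` (symmetric), `u = v̂(x)` and `M = Dv̂(x)`. Since `v ∘ Φ` is the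
field `F = (det DΦ)⁻¹ • DΦ v̂`, we get `Dv(Φ x) = DF(x) A⁻¹`, and the product rule splits
`tr (DF(x) A⁻¹)` into three terms: `(det A)⁻¹ tr M`, the term `(det A)⁻¹ tr (B u A⁻¹)` coming from
the second derivative, and `-(det A)⁻² (D det)(u)` coming from the determinant. In dimension two,
Cayley–Hamilton gives both `det A • A⁻¹ = tr A • 1 - A` and Jacobi's formula
`(D det)(u) = tr A tr (B u) - tr (A B u)`, and with these the last two terms cancel.
-/

/-- Divergence of a planar vector field: trace of the Fréchet derivative,
`div w = ∂w₁/∂x + ∂w₂/∂y`. -/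
noncomputable def div2 (w : ℝ × ℝ → ℝ × ℝ) (p : ℝ × ℝ) : ℝ :=
  (fderiv ℝ w p (1, 0)).1 + (fderiv ℝ w p (0, 1)).2

open Module Polynomial

namespace LinearMap

variable {R M : Type*} [CommRing R] [Nontrivial R] [AddCommGroup M] [Module R M]
  [Module.Free R M] [Module.Finite R M]

theorem charpoly_of_finrank_eq_two (hM : finrank R M = 2) (f : M →ₗ[R] M) :
    f.charpoly = X ^ 2 - C (trace R M f) * X + C f.det := by
  rw [charpoly_def,
    Matrix.charpoly_of_card_eq_two _ (by rw [← finrank_eq_card_chooseBasisIndex, hM]),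
    det_toMatrix, ← trace_eq_matrix_trace]

theorem mul_self_sub_trace_smul_add_det_smul_eq_zero_of_finrank_eq_two (hM : finrank R M = 2)
    (f : M →ₗ[R] M) :
    f * f - trace R M f • f + f.det • 1 = 0 := by
  simpa [charpoly_of_finrank_eq_two hM, sq, Algebra.smul_def] using aeval_self_charpoly f

theorem two_mul_det_of_finrank_eq_two (hM : finrank R M = 2) (f : M →ₗ[R] M) :
    2 * f.det = trace R M f ^ 2 - trace R M (f * f) := by
  have h := congrArg (trace R M)
    (mul_self_sub_trace_smul_add_det_smul_eq_zero_of_finrank_eq_two hM f)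
  simp only [map_add, map_sub, map_smul, trace_one, hM, map_zero, smul_eq_mul] at h
  push_cast at h
  linear_combination h

theorem det_smul_eq_trace_smul_sub_of_finrank_eq_two (hM : finrank R M = 2) {f g : M →ₗ[R] M}
    (hfg : f * g = 1) :
    f.det • g = trace R M f • 1 - f := by
  have h := congrArg (· * g) (mul_self_sub_trace_smul_add_det_smul_eq_zero_of_finrank_eq_two hM f)
  simp only [sub_mul, add_mul, mul_assoc, hfg, smul_mul_assoc, one_mul, mul_one, zero_mul] at h
  rw [← sub_eq_zero, ← h]
  abel

theorem det_mul_trace_mul_eq_of_finrank_eq_two (hM : finrank R M = 2) {f g : M →ₗ[R] M}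
    (hfg : f * g = 1) (k : M →ₗ[R] M) :
    f.det * trace R M (k * g) = trace R M f * trace R M k - trace R M (k * f) := by
  rw [← smul_eq_mul, ← map_smul, ← mul_smul_comm,
    det_smul_eq_trace_smul_sub_of_finrank_eq_two hM hfg, mul_sub, mul_smul_comm, mul_one, map_sub,
    map_smul, smul_eq_mul, mul_comm]

end LinearMap

open LinearMap

section Calculus

variable {𝕜 E F : Type*} [NontriviallyNormedField 𝕜]
  [NormedAddCommGroup E] [NormedSpace 𝕜 E] [NormedAddCommGroup F] [NormedSpace 𝕜 F]

theorem HasStrictFDerivAt.hasFDerivAt_of_eventually_comp_eq {G : Type*} [NormedAddCommGroup G]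
    [NormedSpace 𝕜 G] [CompleteSpace F] {Φ : F → E} {A : F ≃L[𝕜] E} {x : F}
    (hΦ : HasStrictFDerivAt Φ (A : F →L[𝕜] E) x) {f : F → G} {D : F →L[𝕜] G}
    (hf : HasFDerivAt f D x) {v : E → G} (hv : ∀ᶠ y in nhds x, v (Φ y) = f y) :
    HasFDerivAt v (D ∘L (A.symm : E →L[𝕜] F)) (Φ x) := by
  have hΨx : hΦ.localInverse Φ A x (Φ x) = x := hΦ.localInverse_apply_image
  have hΨ : Filter.Tendsto (hΦ.localInverse Φ A x) (nhds (Φ x)) (nhds x) := by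
    have h := hΦ.localInverse_continuousAt.tendsto
    rwa [hΨx] at h
  have hvΨ : v =ᶠ[nhds (Φ x)] f ∘ hΦ.localInverse Φ A x := by
    filter_upwards [hΦ.eventually_right_inverse, hΨ.eventually hv] with y hy hvy
    rw [Function.comp_apply, ← hvy, hy]
  exact ((hΨx ▸ hf).comp (Φ x) hΦ.to_localInverse.hasFDerivAt).congr_of_eventuallyEq hvΨ

variable [FiniteDimensional 𝕜 E]

theorem ContinuousLinearMap.trace_smulRight_comp (f : E →L[𝕜] 𝕜) (w : E) (g : E →L[𝕜] E) :
    trace 𝕜 E ↑(f.smulRight w ∘L g) = f (g w) :=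
  trace_smulRight ((f ∘L g : E →L[𝕜] 𝕜) : E →ₗ[𝕜] 𝕜) w

variable [CompleteSpace 𝕜] [CharZero 𝕜]

theorem HasFDerivAt.exists_hasFDerivAt_det_of_finrank_eq_two (hE : finrank 𝕜 E = 2)
    {G : F → E →L[𝕜] E} {B : F →L[𝕜] E →L[𝕜] E} {x : F} (hG : HasFDerivAt G B x) :
    ∃ δ : F →L[𝕜] 𝕜, HasFDerivAt (fun y => (G y).det) δ x ∧
      ∀ h, δ h = trace 𝕜 E (G x) * trace 𝕜 E (B h) - trace 𝕜 E (G x ∘L B h) := by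
  let τ : (E →L[𝕜] E) →L[𝕜] 𝕜 :=
    toContinuousLinearMap (trace 𝕜 E ∘ₗ ContinuousLinearMap.coeLM 𝕜)
  have hτ : ∀ L, τ L = trace 𝕜 E L := fun _ => rfl
  have hdet :
      (fun y => (G y).det) = fun y => (2 : 𝕜)⁻¹ * (τ (G y) ^ 2 - τ (G y ∘L G y)) := by
    funext y
    rw [hτ, hτ, ContinuousLinearMap.toLinearMap_comp, ← Module.End.mul_eq_comp,
      ← two_mul_det_of_finrank_eq_two hE]
    field_simp
  have h := (((τ.hasFDerivAt.comp x hG).pow 2).sub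
    (τ.hasFDerivAt.comp x (hG.clm_comp hG))).const_mul (2 : 𝕜)⁻¹
  refine ⟨_, hdet ▸ h, fun h => ?_⟩
  simp only [Function.comp_apply, hτ, Nat.add_one_sub_one, pow_one, nsmul_eq_mul, Nat.cast_ofNat,
    ContinuousLinearMap.comp_add, _root_.smul_apply, _root_.sub_apply, smul_eq_mul,
    ContinuousLinearMap.comp_apply, _root_.add_apply, ContinuousLinearMap.compL_apply,
    ContinuousLinearMap.flip_apply,
    ContinuousLinearMap.toLinearMap_comp, trace_comp_comm' (B h : E →ₗ[𝕜] E)]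
  ring

theorem HasFDerivAt.exists_hasFDerivAt_piola_of_finrank_eq_two (hE : finrank 𝕜 E = 2)
    {G : E → E →L[𝕜] E} {B : E →L[𝕜] E →L[𝕜] E} {x : E} (hG : HasFDerivAt G B x)
    (hB : ∀ h k, B h k = B k h) {u : E → E} {M : E →L[𝕜] E} (hu : HasFDerivAt u M x)
    {A : E ≃L[𝕜] E} (hA : G x = A) :
    ∃ D : E →L[𝕜] E, HasFDerivAt (fun y => (G y).det⁻¹ • G y (u y)) D x ∧
      trace 𝕜 E (D ∘L (A.symm : E →L[𝕜] E)) = (G x).det⁻¹ * trace 𝕜 E M := by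
  obtain ⟨δ, hδ, hδ_apply⟩ := hG.exists_hasFDerivAt_det_of_finrank_eq_two hE
  have hdet : (G x).det ≠ 0 := hA ▸ A.toLinearEquiv.isUnit_det'.ne_zero
  refine ⟨_, (HasFDerivAt.comp x (hasFDerivAt_inv hdet) hδ).smul (hG.clm_apply hu), ?_⟩
  have hflip : B.flip (u x) = B (u x) := by ext k; exact hB k (u x)
  have hconj : trace 𝕜 E ↑((G x ∘L M) ∘L (A.symm : E →L[𝕜] E)) = trace 𝕜 E M := by
    simpa [LinearEquiv.conj_apply, hA] using trace_conj' (M : E →ₗ[𝕜] E) A.toLinearEquiv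
  have hcof : (G x).det * trace 𝕜 E ↑(B (u x) ∘L (A.symm : E →L[𝕜] E)) =
      trace 𝕜 E (G x) * trace 𝕜 E (B (u x)) - trace 𝕜 E ↑(G x ∘L B (u x)) := by
    rw [ContinuousLinearMap.toLinearMap_comp (G x), trace_comp_comm']
    exact det_mul_trace_mul_eq_of_finrank_eq_two hE (by ext y; simp [hA]) _
  have hAu : A.symm (G x (u x)) = u x := by rw [hA]; exact A.symm_apply_apply _
  simp only [ContinuousLinearMap.add_comp, ContinuousLinearMap.smul_comp, hflip,
    ContinuousLinearMap.toLinearMap_add, ContinuousLinearMap.toLinearMap_smul, map_add, map_smul,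
    smul_eq_mul, hconj, ContinuousLinearMap.trace_smulRight_comp, ContinuousLinearMap.comp_apply,
    ContinuousLinearEquiv.coe_coe, hAu, ContinuousLinearMap.toSpanSingleton_apply, hδ_apply]
  field_simp
  linear_combination hcof

end Calculus

theorem div2_eq_trace_fderiv (w : ℝ × ℝ → ℝ × ℝ) (p : ℝ × ℝ) :
    div2 w p = trace ℝ (ℝ × ℝ) (fderiv ℝ w p) := by
  rw [trace_eq_matrix_trace ℝ (Module.Basis.finTwoProd ℝ), Matrix.trace_fin_two]
  simp [div2, toMatrix_apply]

theorem piola_transform_divergence_general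
    (U : Set (ℝ × ℝ)) (hU : IsOpen U)
    (Φ : ℝ × ℝ → ℝ × ℝ) (hΦ : ContDiffOn ℝ 2 Φ U)
    (hdet : ∀ x ∈ U, (fderiv ℝ Φ x).det ≠ 0)
    (vhat : ℝ × ℝ → ℝ × ℝ) (hvhat : ContDiffOn ℝ 1 vhat U)
    (v : ℝ × ℝ → ℝ × ℝ)
    (hv : ∀ x ∈ U, v (Φ x) = ((fderiv ℝ Φ x).det)⁻¹ • (fderiv ℝ Φ x (vhat x))) :
    ∀ x ∈ U, div2 v (Φ x) = ((fderiv ℝ Φ x).det)⁻¹ * div2 vhat x := by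
  intro x hx
  have hUx : U ∈ nhds x := hU.mem_nhds hx
  have hΦx : ContDiffAt ℝ 2 Φ x := hΦ.contDiffAt hUx
  let A : (ℝ × ℝ) ≃L[ℝ] (ℝ × ℝ) :=
    (equivOfDetNeZero (fderiv ℝ Φ x : (ℝ × ℝ) →ₗ[ℝ] (ℝ × ℝ)) (hdet x hx)).toContinuousLinearEquiv
  have hA : fderiv ℝ Φ x = A := ContinuousLinearMap.ext fun _ => rfl
  have hD2Φ : HasFDerivAt (fderiv ℝ Φ) (fderiv ℝ (fderiv ℝ Φ) x) x :=
    ((hΦ.fderiv_of_isOpen hU (by norm_num)).contDiffAt hUx).differentiableAt one_ne_zero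
      |>.hasFDerivAt
  obtain ⟨D, hD, htrace⟩ := hD2Φ.exists_hasFDerivAt_piola_of_finrank_eq_two (by simp)
    (hΦx.isSymmSndFDerivAt (by simp))
    ((hvhat.contDiffAt hUx).differentiableAt one_ne_zero).hasFDerivAt hA
  have hDv := (hA ▸ hΦx.hasStrictFDerivAt (by norm_num)).hasFDerivAt_of_eventually_comp_eq hD
    (Filter.eventually_of_mem hUx hv)
  rw [div2_eq_trace_fderiv, div2_eq_trace_fderiv, hDv.fderiv, htrace]

/-- The divergence of the Piola transform `v` of a reference field `vhat` under a
C² diffeomorphism `Φ` with nowhere-vanishing Jacobian determinant satisfies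
`(div v)(Φ x) = (det DΦ x)⁻¹ * (div vhat)(x)` for every `x ∈ U`. -/
theorem piola_transform_divergence
    (U V : Set (ℝ × ℝ)) (hU : IsOpen U) (hV : IsOpen V)
    (Φ : ℝ × ℝ → ℝ × ℝ) (hΦ : ContDiffOn ℝ 2 Φ U)
    (hΦinj : Set.InjOn Φ U) (hΦonto : Φ '' U = V)
    (hdet : ∀ x ∈ U, (fderiv ℝ Φ x).det ≠ 0)
    (vhat : ℝ × ℝ → ℝ × ℝ) (hvhat : ContDiffOn ℝ 1 vhat U)
    (v : ℝ × ℝ → ℝ × ℝ)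
    (hv : ∀ x ∈ U, v (Φ x) = ((fderiv ℝ Φ x).det)⁻¹ • (fderiv ℝ Φ x (vhat x))) :
    ∀ x ∈ U, div2 v (Φ x) = ((fderiv ℝ Φ x).det)⁻¹ * div2 vhat x :=
  piola_transform_divergence_general U hU Φ hΦ hdet vhat hvhat v hv
end

section
/- Let v₁=(0,0), v₂=(2,0), v₃=(1,2), v₄=(0,2) be the vertices of the trapezoid T, with edges e₁ from v₂ to v₃, e₂ from v₃ to v₄, e₃ from v₄ to v₁, e₄ from v₁ to v₂. Define the rational vector field Ψ₄(x,y) = ( (4x−4+y)/(4−y) + 4x(y−1)/(4−y)², 4(1−y)/(4−y) ) on {(x,y) ∈ ℝ² : y < 4}. Then the outward-normal fluxes of Ψ₄ across the four edges are ∫_{e₁} Ψ₄·n ds = 2, ∫_{e₂} Ψ₄·n ds = −2, ∫_{e₃} Ψ₄·n ds = 2, ∫_{e₄} Ψ₄·n ds = −2. -/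
/-!
Ψ₄ is the Piola transform of the field (x̂, −ŷ), whose normal component is constant on each
side of the reference square. Piola transforms carry normal fluxes along, so the flux density
Ψ₄ · rot(b − a) is constant along each edge of T, and each edge flux equals that constant.
-/

/-- Rotation of a planar vector by 90° clockwise: `rot (w₁, w₂) = (w₂, -w₁)`. -/
def rot2 (w : ℝ × ℝ) : ℝ × ℝ := (w.2, -w.1)

/-- Euclidean dot product on `ℝ × ℝ`. -/
def dot2 (p q : ℝ × ℝ) : ℝ := p.1 * q.1 + p.2 * q.2

/-- Outward-normal flux of a vector field `u` across the segment from `a` to `b`: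
`∫₀¹ u((1−t)a + t b) · rot(b − a) dt`. -/
noncomputable def normalFlux (u : ℝ × ℝ → ℝ × ℝ) (a b : ℝ × ℝ) : ℝ :=
  ∫ t in (0:ℝ)..1, dot2 (u ((1 - t) • a + t • b)) (rot2 (b - a))

/-- The fourth candidate AC₀ basis field on the trapezoid, given in physical
coordinates (defined for y < 4). -/
noncomputable def Psi4 (p : ℝ × ℝ) : ℝ × ℝ :=
  ((4 * p.1 - 4 + p.2) / (4 - p.2) + 4 * p.1 * (p.2 - 1) / (4 - p.2) ^ 2,
    4 * (1 - p.2) / (4 - p.2))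

theorem normalFlux_eq_of_forall {u : ℝ × ℝ → ℝ × ℝ} {a b : ℝ × ℝ} {c : ℝ}
    (h : ∀ t ∈ Set.Icc (0:ℝ) 1, dot2 (u ((1 - t) • a + t • b)) (rot2 (b - a)) = c) :
    normalFlux u a b = c := by
  rw [normalFlux, intervalIntegral.integral_congr (g := fun _ => c),
    intervalIntegral.integral_const]
  · simp
  · intro t ht
    rw [Set.uIcc_of_le zero_le_one] at ht
    exact h t ht

section Psi4
variable {p : ℝ × ℝ}

theorem dot2_Psi4_of_two_mul_fst_add_snd_eq_four (hp : 2 * p.1 + p.2 = 4) (hp' : p.2 ≠ 4) :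
    dot2 (Psi4 p) (2, 1) = 2 := by
  have : 4 - p.2 ≠ 0 := sub_ne_zero.2 hp'.symm
  obtain ⟨x, y⟩ := p
  obtain rfl : x = (4 - y) / 2 := by linarith
  simp only [dot2, Psi4]
  field_simp
  ring

theorem dot2_Psi4_of_snd_eq_two (hp : p.2 = 2) : dot2 (Psi4 p) (0, 1) = -2 := by
  norm_num [dot2, Psi4, hp]

theorem dot2_Psi4_of_fst_eq_zero (hp : p.1 = 0) (hp' : p.2 ≠ 4) :
    dot2 (Psi4 p) (-2, 0) = 2 := by
  have : 4 - p.2 ≠ 0 := sub_ne_zero.2 hp'.symm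
  simp only [dot2, Psi4, hp]
  field_simp
  ring

theorem dot2_Psi4_of_snd_eq_zero (hp : p.2 = 0) : dot2 (Psi4 p) (0, -2) = -2 := by
  norm_num [dot2, Psi4, hp]

end Psi4

/-- The outward-normal fluxes of Ψ₄ across the edges e₁ (v₂→v₃), e₂ (v₃→v₄),
e₃ (v₄→v₁), e₄ (v₁→v₂) of the trapezoid with vertices v₁=(0,0), v₂=(2,0),
v₃=(1,2), v₄=(0,2) are 2, −2, 2, −2. -/
theorem trapezoid_Psi4_edge_fluxes :
    normalFlux Psi4 ((2:ℝ), (0:ℝ)) ((1:ℝ), (2:ℝ)) = 2 ∧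
    normalFlux Psi4 ((1:ℝ), (2:ℝ)) ((0:ℝ), (2:ℝ)) = -2 ∧
    normalFlux Psi4 ((0:ℝ), (2:ℝ)) ((0:ℝ), (0:ℝ)) = 2 ∧
    normalFlux Psi4 ((0:ℝ), (0:ℝ)) ((2:ℝ), (0:ℝ)) = -2 := by
  refine ⟨normalFlux_eq_of_forall fun t ht => ?_, normalFlux_eq_of_forall fun t _ => ?_,
    normalFlux_eq_of_forall fun t ht => ?_, normalFlux_eq_of_forall fun t _ => ?_⟩
  all_goals norm_num only [rot2, Prod.mk_sub_mk]
  · exact dot2_Psi4_of_two_mul_fst_add_snd_eq_four (by simp; ring) (by simp; linarith [ht.2])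
  · exact dot2_Psi4_of_snd_eq_two (by simp; ring)
  · exact dot2_Psi4_of_fst_eq_zero (by simp) (by simp; linarith [ht.1])
  · exact dot2_Psi4_of_snd_eq_zero (by simp)
end
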